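/- arXiv:2006.02966 — 2 statements merged into one kernel-verified Lean document; each statement's English description precedes it below -/
import Mathlib

section
/- Let k ≥ n ≥ 3. Then for every m ≥ 0, q(m+1) = F_{n,k} + Σ_{i=1}^n F_{n,k+i}·N_{a_i}(m); equivalently, X_{n,k} = { F_{n,k} + Σ_{i=1}^n F_{n,k+i}·N_{a_i}(m) : m ≥ 0 }. -/
/-- `L` encodes an `n`-decomposition of `x`: indices at least `n`, consecutive
gaps at least `n`, summing (via `F`) to `x`. -/
def IsDecompOf (n : ℕ) (F : ℕ → ℕ) (L : List ℕ) (x : ℕ) : Prop :=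
  (∀ c ∈ L, n ≤ c) ∧ L.Chain' (fun a b => a + n ≤ b) ∧ (L.map F).sum = x

/-- `x` is a positive integer whose `n`-decomposition has `F k` as its
smallest summand (i.e. `k` is the smallest index used). -/
def MemXnk (n k : ℕ) (F : ℕ → ℕ) (x : ℕ) : Prop :=
  0 < x ∧ ∃ L : List ℕ, IsDecompOf n F L x ∧ k ∈ L ∧ ∀ c ∈ L, k ≤ c

/-! Put `G m = F k + ∑_{j < m} F (k + W j)`, the weight of the first `m` letters of `S_∞` when the
letter `a_i` weighs `F (k + i)`. Since `S_c` obeys the same recurrence as `F`, the weight of `S_c`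
is `F (k + c)`. If `m = F c₁ + ⋯ + F c_r` with `c₁ < ⋯ < c_r` spaced by at least `n`, the first `m`
letters of `S_∞` are `S_{c_r} ⋯ S_{c₁}`, so `G m = F k + F (k + c₁) + ⋯ + F (k + c_r)`, a sum whose
indices `k < k + c₁ < ⋯` again form a decomposition starting at `k`. Conversely, every such
decomposition arises from some `m`. Hence the strictly increasing `G` enumerates `X_{n,k}`. -/

structure IsNFibonacci (n : ℕ) (F : ℕ → ℕ) : Prop where
  eq_one : ∀ i, 1 ≤ i → i ≤ n → F i = 1
  succ : ∀ m, n ≤ m → F (m + 1) = F m + F (m + 1 - n)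

structure IsNString (n : ℕ) (S : ℕ → List ℕ) : Prop where
  eq_singleton : ∀ i, 1 ≤ i → i ≤ n → S i = [i]
  succ : ∀ m, n ≤ m → S (m + 1) = S m ++ S (m + 1 - n)

variable {n k : ℕ} {F : ℕ → ℕ} {S : ℕ → List ℕ} {W : ℕ → ℕ}

theorem Finset.sum_mul_count_eq_sum_map {α : Type*} [DecidableEq α] {s : Finset α} {w : List α}
    (hw : ∀ i ∈ w, i ∈ s) (f : α → ℕ) : ∑ i ∈ s, f i * w.count i = (w.map f).sum := by
  rw [Finset.sum_list_map_count]
  refine (Finset.sum_subset (fun i hi => hw i (List.mem_toFinset.mp hi)) fun i _ hi => ?_).symm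
    |>.trans (Finset.sum_congr rfl fun i _ => by rw [smul_eq_mul, mul_comm])
  rw [List.count_eq_zero.mpr (mt List.mem_toFinset.mpr hi), mul_zero]

@[elab_as_elim]
theorem Nat.lag_induction (hn : 1 ≤ n) {P : ℕ → Prop} (base : ∀ i, 1 ≤ i → i ≤ n → P i)
    (step : ∀ m, n ≤ m → P m → P (m + 1 - n) → P (m + 1)) {c : ℕ} (hc : 1 ≤ c) : P c := by
  induction c using Nat.strong_induction_on with
  | _ c ih =>
    rcases le_or_gt c n with h | h
    · exact base c hc h
    · obtain ⟨m, rfl⟩ : ∃ m, c = m + 1 := ⟨c - 1, by omega⟩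
      exact step m (by omega) (ih m (by omega) (by omega)) (ih _ (by omega) (by omega))

namespace IsNFibonacci

theorem one_le (hF : IsNFibonacci n F) (hn : 1 ≤ n) {c : ℕ} (hc : 1 ≤ c) : 1 ≤ F c :=
  Nat.lag_induction hn (fun i h1 h2 => (hF.eq_one i h1 h2).ge)
    (fun m hm h _ => by rw [hF.succ m hm]; omega) hc

theorem lt_add (hF : IsNFibonacci n F) (hn : 1 ≤ n) (j : ℕ) : j < F (n + j) := by
  induction j with
  | zero => simp [hF.eq_one n hn le_rfl]
  | succ j ih =>
    have := hF.one_le hn (c := j + 1) (by omega)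
    rw [← add_assoc, hF.succ _ (by omega), show n + j + 1 - n = j + 1 by omega]
    omega

theorem exists_isDecompOf_lt (hF : IsNFibonacci n F) (hn : 1 ≤ n) {c : ℕ} (hc : 1 ≤ c) :
    ∀ x < F c, ∃ L, IsDecompOf n F L x ∧ ∀ e ∈ L, e < c := by
  refine Nat.lag_induction (P := fun c => ∀ x < F c, ∃ L, IsDecompOf n F L x ∧ ∀ e ∈ L, e < c)
    hn (fun i h1 h2 x hx => ?_) (fun m hm ih ih' x hx => ?_) hc
  · rw [hF.eq_one i h1 h2, Nat.lt_one_iff] at hx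
    exact ⟨[], ⟨by simp, List.isChain_nil, by simp [hx]⟩, by simp⟩
  · rw [hF.succ m hm] at hx
    by_cases hxm : x < F m
    · obtain ⟨L, hL, hLm⟩ := ih x hxm
      exact ⟨L, hL, fun e he => (hLm e he).trans (Nat.lt_succ_self m)⟩
    obtain ⟨L, ⟨hLn, hLc, hLs⟩, hLm⟩ := ih' (x - F m) (by omega)
    refine ⟨L ++ [m], ⟨?_, ?_, ?_⟩, ?_⟩
    · exact List.forall_mem_append.mpr ⟨hLn, by simpa using hm⟩
    · refine List.isChain_append.mpr ⟨hLc, List.isChain_singleton m, fun a ha b hb => ?_⟩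
      have := hLm a (List.mem_of_getLast? ha)
      simp only [List.head?_cons, Option.mem_def, Option.some.injEq] at hb
      omega
    · simp only [List.map_append, List.sum_append, hLs, List.map_cons, List.map_nil,
        List.sum_singleton]
      omega
    · simp only [List.mem_append, List.mem_singleton]
      rintro e (he | rfl)
      exacts [(hLm e he).trans (by omega), Nat.lt_succ_self e]

theorem exists_isDecompOf (hF : IsNFibonacci n F) (hn : 1 ≤ n) (x : ℕ) :
    ∃ L, IsDecompOf n F L x :=
  (hF.exists_isDecompOf_lt hn (c := n + x) (by omega) x (hF.lt_add hn x)).imp fun _ h => h.1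

end IsNFibonacci

namespace IsNString

theorem sum_map_eq {M : Type*} [AddMonoid M] (hS : IsNString n S) (hn : 1 ≤ n) {g : ℕ → M}
    (hg : ∀ m, n ≤ m → g (m + 1) = g m + g (m + 1 - n)) {c : ℕ} (hc : 1 ≤ c) :
    ((S c).map g).sum = g c :=
  Nat.lag_induction hn (fun i h1 h2 => by simp [hS.eq_singleton i h1 h2])
    (fun m hm ih ih' => by rw [hS.succ m hm, List.map_append, List.sum_append, ih, ih', hg m hm])
    hc

theorem mem_Icc (hS : IsNString n S) (hn : 1 ≤ n) {c : ℕ} (hc : 1 ≤ c) :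
    ∀ i ∈ S c, i ∈ Finset.Icc 1 n :=
  Nat.lag_induction hn (fun i h1 h2 => by simp [hS.eq_singleton i h1 h2, h1, h2])
    (fun m hm ih ih' i hi => by
      rw [hS.succ m hm, List.mem_append] at hi
      exact hi.elim (ih i) (ih' i)) hc

theorem length_eq (hS : IsNString n S) (hF : IsNFibonacci n F) (hn : 1 ≤ n) {c : ℕ}
    (hc : 1 ≤ c) : (S c).length = F c := by
  have hF_letters : (S c).map F = (S c).map fun _ => 1 := List.map_congr_left fun i hi => by
    obtain ⟨h1, h2⟩ := Finset.mem_Icc.mp (hS.mem_Icc hn hc i hi)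
    exact hF.eq_one i h1 h2
  rw [← hS.sum_map_eq hn hF.succ hc, hF_letters]
  simp

theorem prefix_of_le (hS : IsNString n S) {a b : ℕ} (ha : n ≤ a) (hab : a ≤ b) : S a <+: S b := by
  induction b, hab using Nat.le_induction with
  | base => exact List.prefix_rfl
  | succ b hb ih =>
    rw [hS.succ b (by omega)]
    exact ih.trans (List.prefix_append _ _)

theorem flatten_prefix (hS : IsNString n S) {E : List ℕ} {b : ℕ}
    (hE : E.Pairwise (fun a c => c + n ≤ a)) (hEb : ∀ c ∈ E, n ≤ c ∧ c < b) :
    (E.map S).flatten <+: S b := by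
  induction E generalizing b with
  | nil => exact List.nil_prefix
  | cons c E ih =>
    obtain ⟨hcE, hE⟩ := List.pairwise_cons.mp hE
    obtain ⟨hnc, hcb⟩ := hEb c List.mem_cons_self
    have hE_prefix : (E.map S).flatten <+: S (c + 1 - n) :=
      ih hE fun e he => ⟨(hEb e (List.mem_cons_of_mem c he)).1, by have := hcE e he; omega⟩
    rw [List.map_cons, List.flatten_cons]
    exact ((List.prefix_append_right_inj (S c)).mpr hE_prefix).trans
      ((hS.succ c hnc).symm ▸ hS.prefix_of_le (by omega) hcb)

end IsNString

namespace IsDecompOf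

theorem pairwise {L : List ℕ} {x : ℕ} (h : IsDecompOf n F L x) :
    L.Pairwise (fun a b => a + n ≤ b) :=
  have : IsTrans ℕ (fun a b => a + n ≤ b) := ⟨fun _ _ _ _ _ => by omega⟩
  List.isChain_iff_pairwise.mp h.2.1

theorem cons_map_add (hk : n ≤ k) {L : List ℕ} {x : ℕ} (hL : IsDecompOf n F L x) :
    IsDecompOf n F (k :: L.map (k + ·)) (F k + (L.map fun c => F (k + c)).sum) := by
  obtain ⟨hLn, hLc, -⟩ := hL
  refine ⟨?_, ?_, by simp [List.map_map, Function.comp_def]⟩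
  · simp only [List.mem_cons, List.mem_map]
    rintro c (rfl | ⟨l, hl, rfl⟩)
    exacts [hk, by omega]
  · refine List.isChain_cons.mpr ⟨fun y hy => ?_, (List.isChain_map _).mpr (hLc.imp fun _ _ h => by
      omega)⟩
    obtain ⟨l, hl, rfl⟩ := List.mem_map.mp (List.mem_of_mem_head? hy)
    have := hLn l hl
    omega

theorem exists_of_cons {L : List ℕ} {x : ℕ} (h : IsDecompOf n F (k :: L) x) :
    ∃ T, IsDecompOf n F T (T.map F).sum ∧ x = F k + (T.map fun c => F (k + c)).sum := by
  have hkL := (List.pairwise_cons.mp h.pairwise).1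
  obtain ⟨-, hc, hx⟩ := h
  obtain ⟨T, rfl⟩ : ∃ T, L = T.map (k + ·) :=
    ⟨L.map (· - k), by
      rw [List.map_map]
      exact (List.map_congr_left (g := id) fun l hl => by have := hkL l hl; simp; omega).trans
        (List.map_id L) |>.symm⟩
  refine ⟨T, ⟨fun t ht => ?_, ?_, rfl⟩, by simpa [List.map_map, Function.comp_def] using hx.symm⟩
  · have := hkL _ (List.mem_map_of_mem ht)
    omega
  · exact ((List.isChain_map _).mp (List.isChain_cons.mp hc).2).imp fun _ _ h => by omega

end IsDecompOf

theorem eq_map_range_of_prefix (hW : ∀ m, n ≤ m → S m = (List.range (S m).length).map W)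
    {b : ℕ} (hb : n ≤ b) {w : List ℕ} (hw : w <+: S b) : w = (List.range w.length).map W := by
  rw [hW b hb] at hw
  conv_lhs => rw [List.prefix_iff_eq_take.mp hw]
  rw [← List.map_take, List.take_range, min_eq_left (by simpa using hw.length_le)]

theorem IsNString.apply_mem_Icc (hS : IsNString n S) (hF : IsNFibonacci n F)
    (hW : ∀ m, n ≤ m → S m = (List.range (S m).length).map W) (hn : 1 ≤ n) (j : ℕ) :
    W j ∈ Finset.Icc 1 n := by
  have hj : j < (S (n + j)).length := by
    rw [hS.length_eq hF hn (by omega)]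
    exact hF.lt_add hn j
  refine hS.mem_Icc hn (c := n + j) (by omega) _ ?_
  rw [hW _ (by omega)]
  exact List.mem_map_of_mem (List.mem_range.mpr hj)

theorem IsNString.map_range_sum_eq_flatten (hS : IsNString n S) (hF : IsNFibonacci n F)
    (hW : ∀ m, n ≤ m → S m = (List.range (S m).length).map W) (hn : 1 ≤ n) {E : List ℕ}
    (hE : E.Pairwise (fun a c => c + n ≤ a)) (hEn : ∀ c ∈ E, n ≤ c) :
    (List.range (E.map F).sum).map W = (E.map S).flatten := by
  have hlen : ((E.map S).flatten).length = (E.map F).sum := by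
    rw [List.length_flatten, List.map_map]
    exact congrArg List.sum (List.map_congr_left fun c hc => hS.length_eq hF hn (by
      have := hEn c hc; omega))
  have hprefix : (E.map S).flatten <+: S (n + E.sum + 1) :=
    hS.flatten_prefix hE fun c hc => ⟨hEn c hc, by have := List.le_sum_of_mem hc; omega⟩
  rw [eq_map_range_of_prefix hW (by omega) hprefix, hlen]

theorem sum_map_range_eq_of_isDecompOf (hS : IsNString n S) (hF : IsNFibonacci n F)
    (hW : ∀ m, n ≤ m → S m = (List.range (S m).length).map W) (hn : 1 ≤ n) (k : ℕ)
    {L : List ℕ} {x : ℕ} (hL : IsDecompOf n F L x) :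
    ((List.range x).map fun j => F (k + W j)).sum = (L.map fun c => F (k + c)).sum := by
  have hE : L.reverse.Pairwise (fun a c => c + n ≤ a) := List.pairwise_reverse.mpr hL.pairwise
  obtain ⟨hLn, -, rfl⟩ := hL
  have hflat :=
    hS.map_range_sum_eq_flatten hF hW hn hE fun c hc => hLn c (List.mem_reverse.mp hc)
  rw [List.map_reverse, List.sum_reverse] at hflat
  have hblock : ∀ c ∈ L.reverse, ((S c).map fun i => F (k + i)).sum = F (k + c) := fun c hc =>
    hS.sum_map_eq hn (fun m hm => by
      rw [← add_assoc, hF.succ _ (by omega), show k + m + 1 - n = k + (m + 1 - n) by omega])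
      (by have := hLn c (List.mem_reverse.mp hc); omega)
  calc ((List.range (L.map F).sum).map fun j => F (k + W j)).sum
      = (((L.reverse.map S).flatten).map fun i => F (k + i)).sum := by
        rw [← hflat, List.map_map]; rfl
    _ = (L.reverse.map fun c => F (k + c)).sum := by
        rw [List.map_flatten, List.sum_flatten, List.map_map, List.map_map]
        exact congrArg List.sum (List.map_congr_left hblock)
    _ = (L.map fun c => F (k + c)).sum := by rw [List.map_reverse, List.sum_reverse]

theorem MemXnk.exists_isDecompOf_cons (hn : 1 ≤ n) {x : ℕ} (hx : MemXnk n k F x) :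
    ∃ L, IsDecompOf n F (k :: L) x := by
  obtain ⟨-, _ | ⟨h, L⟩, hL, hkL, hkmin⟩ := hx
  · simp at hkL
  obtain ⟨hhL, -⟩ := List.pairwise_cons.mp hL.pairwise
  obtain rfl : h = k := by
    rcases List.mem_cons.mp hkL with rfl | hk
    · rfl
    · have := hhL k hk
      have := hkmin h List.mem_cons_self
      omega
  exact ⟨L, hL⟩

theorem memXnk_iff (hS : IsNString n S) (hF : IsNFibonacci n F)
    (hW : ∀ m, n ≤ m → S m = (List.range (S m).length).map W) (hn : 1 ≤ n) (hk : n ≤ k)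
    {x : ℕ} : MemXnk n k F x ↔ ∃ m, F k + ((List.range m).map fun j => F (k + W j)).sum = x := by
  constructor
  · intro hx
    obtain ⟨L, hL⟩ := hx.exists_isDecompOf_cons hn
    obtain ⟨T, hT, rfl⟩ := hL.exists_of_cons
    exact ⟨(T.map F).sum, by rw [sum_map_range_eq_of_isDecompOf hS hF hW hn k hT]⟩
  · rintro ⟨m, rfl⟩
    obtain ⟨L, hL⟩ := hF.exists_isDecompOf hn m
    rw [sum_map_range_eq_of_isDecompOf hS hF hW hn k hL]
    refine ⟨by have := hF.one_le hn (c := k) (by omega); omega, _, hL.cons_map_add hk,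
      List.mem_cons_self, ?_⟩
    simp only [List.mem_cons, List.mem_map]
    rintro c (rfl | ⟨l, -, rfl⟩) <;> omega

/-- Let `k ≥ n ≥ 3`, let `W = S_∞` be the infinite `n`-string with
`N_{a_i}(m) = ((List.range m).map W).count i`, and let `q 1 < q 2 < ⋯`
enumerate the positive integers whose `n`-decomposition has `F k` as smallest
summand.  Then for every `m ≥ 0`,
`q (m+1) = F k + Σ_{i=1}^n F (k+i) · N_{a_i}(m)`. -/
theorem q_formula (n k : ℕ) (hn : 3 ≤ n) (hk : n ≤ k)
    (F : ℕ → ℕ)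
    (hF1 : ∀ i, 1 ≤ i → i ≤ n → F i = 1)
    (hFrec : ∀ m, n ≤ m → F (m + 1) = F m + F (m + 1 - n))
    (S : ℕ → List ℕ)
    (hS1 : ∀ i, 1 ≤ i → i ≤ n → S i = [i])
    (hSrec : ∀ m, n ≤ m → S (m + 1) = S m ++ S (m + 1 - n))
    (W : ℕ → ℕ)
    (hW : ∀ m, n ≤ m → S m = (List.range (S m).length).map W)
    (q : ℕ → ℕ)
    (hq_mem : ∀ r, 1 ≤ r → MemXnk n k F (q r))
    (hq_mono : ∀ r, 1 ≤ r → q r < q (r + 1))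
    (hq_surj : ∀ x, MemXnk n k F x → ∃ r, 1 ≤ r ∧ q r = x) :
    ∀ m : ℕ, q (m + 1)
      = F k + ∑ i ∈ Finset.Icc 1 n, F (k + i) * ((List.range m).map W).count i := by
  have hn₁ : 1 ≤ n := by omega
  have hF : IsNFibonacci n F := ⟨hF1, hFrec⟩
  have hS : IsNString n S := ⟨hS1, hSrec⟩
  set G : ℕ → ℕ := fun m => F k + ((List.range m).map fun j => F (k + W j)).sum
  have hG_mono : StrictMono G := strictMono_nat_of_lt_succ fun m => by
    have := hF.one_le hn₁ (c := k + W m) (by omega)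
    simp only [G, List.sum_range_succ]
    omega
  have hq_mono' : StrictMono fun m => q (m + 1) :=
    strictMono_nat_of_lt_succ fun m => hq_mono _ (by omega)
  have hrange : Set.range (fun m => q (m + 1)) = Set.range G := by
    ext x
    constructor
    · rintro ⟨m, rfl⟩
      exact (memXnk_iff hS hF hW hn₁ hk).mp (hq_mem _ (by omega))
    · intro hx
      obtain ⟨r, hr, rfl⟩ := hq_surj x ((memXnk_iff hS hF hW hn₁ hk).mpr hx)
      exact ⟨r - 1, congrArg q (Nat.sub_add_cancel hr)⟩
  intro m
  rw [congrFun ((hq_mono'.range_inj hG_mono).mp hrange) m,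
    Finset.sum_mul_count_eq_sum_map fun i hi => ?_, List.map_map]
  · rfl
  · obtain ⟨j, -, rfl⟩ := List.mem_map.mp hi
    exact hS.apply_mem_Icc hF hW hn₁ j
end

section
/- Let k ≥ n ≥ 3 and m ≥ 2n. Then for every i with 1 ≤ i ≤ F_{n,m-n+1}, q(i + F_{n,m}) = q(i) + F_{n,k+m}. -/
/-!
Write `N y` for the number of elements of `X_{n,k}` below `y`. Putting the index `k + s + n`
on top of a decomposition whose indices are at most `k + s` is a bijection from
`X_{n,k} ∩ [0, F (k + s + 1))` onto `X_{n,k} ∩ [F (k + s + n), F (k + s + n + 1))`: an element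
of `X_{n,k}` in the latter range must use the index `k + s + n`, and the rest of its
decomposition sums to less than `F (k + s + 1)`. Hence `N (F (k + t + 1))` obeys the recursion
of `F`, so it equals `F (t + 1)`, and `N (F (k + m) + x) = F m + N x` for `x ≤ F (k + m - n + 1)`.
As `q r` is the element of `X_{n,k}` with exactly `r - 1` elements below it, applying this to
`x = q i` gives `q (i + F m) = q i + F (k + m)`.
-/

structure IsGenFibonacci (n : ℕ) (F : ℕ → ℕ) : Prop where
  eq_one : ∀ i, 1 ≤ i → i ≤ n → F i = 1
  succ : ∀ m, n ≤ m → F (m + 1) = F m + F (m + 1 - n)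

namespace IsGenFibonacci

variable {n : ℕ} {F : ℕ → ℕ}

theorem pos (hF : IsGenFibonacci n F) (hn : 0 < n) {j : ℕ} (hj : 1 ≤ j) : 0 < F j := by
  induction j using Nat.strong_induction_on with
  | _ j ih =>
    rcases le_or_gt j n with h | h
    · simp [hF.eq_one j hj h]
    · obtain ⟨m, rfl⟩ : ∃ m, j = m + 1 := ⟨j - 1, by omega⟩
      rw [hF.succ m (by omega)]
      have := ih m (by omega) (by omega)
      omega

theorem monotoneOn (hF : IsGenFibonacci n F) : MonotoneOn F (Set.Ici 1) := by
  refine monotoneOn_nat_Ici_of_le_succ fun j hj => ?_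
  rcases lt_or_ge j n with h | h
  · rw [hF.eq_one j hj h.le, hF.eq_one (j + 1) (by omega) h]
  · rw [hF.succ j h]
    omega

theorem lt_succ (hF : IsGenFibonacci n F) (hn : 0 < n) {j : ℕ} (hj : n ≤ j) :
    F j < F (j + 1) := by
  have := hF.pos hn (j := j + 1 - n) (by omega)
  rw [hF.succ j hj]
  omega

theorem le_of_mem_of_sum_map_lt (hF : IsGenFibonacci n F) (hn : 0 < n) {L : List ℕ}
    (hL : ∀ c ∈ L, n ≤ c) {c M : ℕ} (hc : c ∈ L) (h : (L.map F).sum < F (M + 1)) :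
    c ≤ M :=
  Nat.lt_succ_iff.1 <| hF.monotoneOn.reflect_lt (Set.mem_Ici.2 (by have := hL c hc; omega))
    (by simp) ((List.le_sum_of_mem (List.mem_map_of_mem hc)).trans_lt h)

theorem sum_map_lt (hF : IsGenFibonacci n F) (hn : 0 < n) {L : List ℕ}
    (hL : ∀ c ∈ L, n ≤ c) (hgap : L.Pairwise (fun a b => b + n ≤ a)) {M : ℕ}
    (hM : ∀ c ∈ L, c ≤ M) : (L.map F).sum < F (M + 1) := by
  induction L generalizing M with
  | nil => simpa using hF.pos hn (j := M + 1) (by omega)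
  | cons c L ih =>
    rw [List.pairwise_cons] at hgap
    have hc : n ≤ c := hL c (by simp)
    have hrest : (L.map F).sum < F (c + 1 - n) := by
      rw [show c + 1 - n = c - n + 1 by omega]
      exact ih (fun a ha => hL a (by simp [ha])) hgap.2 fun a ha => by
        have := hgap.1 a ha; omega
    calc ((c :: L).map F).sum = F c + (L.map F).sum := by simp
      _ < F c + F (c + 1 - n) := by omega
      _ = F (c + 1) := (hF.succ c hc).symm
      _ ≤ F (M + 1) := hF.monotoneOn (by simp) (by simp) (by have := hM c (by simp); omega)

end IsGenFibonacci

section Decomposition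

variable {n k : ℕ} {F : ℕ → ℕ}

-- With the indices listed in decreasing order, the largest summand is the head of the list.
theorem memXnk_iff_desc {x : ℕ} :
    MemXnk n k F x ↔ 0 < x ∧ ∃ L : List ℕ, (∀ c ∈ L, n ≤ c) ∧
      L.Pairwise (fun a b => b + n ≤ a) ∧ (L.map F).sum = x ∧
      k ∈ L ∧ ∀ c ∈ L, k ≤ c := by
  have : Trans (fun a b : ℕ => a + n ≤ b) (fun a b => a + n ≤ b) (fun a b => a + n ≤ b) :=
    ⟨fun h₁ h₂ => by omega⟩
  constructor
  · rintro ⟨hx, L, ⟨hge, hchain, rfl⟩, hk, hmin⟩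
    exact ⟨hx, L.reverse, by simpa using hge, List.pairwise_reverse.2 hchain.pairwise,
      by simp [List.sum_reverse], by simpa using hk, by simpa using hmin⟩
  · rintro ⟨hx, L, hge, hgap, rfl, hk, hmin⟩
    refine ⟨hx, L.reverse, ⟨by simpa using hge, ?_, by simp [List.sum_reverse]⟩,
      by simpa using hk, by simpa using hmin⟩
    exact (List.pairwise_reverse.2 (by simpa using hgap)).isChain

theorem memXnk_self (hF : IsGenFibonacci n F) (hn : 0 < n) (hk : n ≤ k) : MemXnk n k F (F k) :=
  memXnk_iff_desc.2 ⟨hF.pos hn (by omega), [k], by simpa using hk, by simp, by simp, by simp,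
    by simp⟩

theorem eq_of_memXnk_of_lt (hF : IsGenFibonacci n F) (hn : 0 < n) {y : ℕ}
    (hy : MemXnk n k F y) (hlt : y < F (k + n)) : y = F k := by
  obtain ⟨-, L, hge, hgap, rfl, hkL, hmin⟩ := memXnk_iff_desc.1 hy
  have hle : ∀ c ∈ L, c < k + n := fun c hc =>
    Nat.lt_of_le_sub_one (by omega) <| hF.le_of_mem_of_sum_map_lt hn hge hc (by
      rwa [Nat.sub_add_cancel (by omega)])
  match L, hgap, hkL, hmin, hle with
  | [c], _, hkL, _, _ => simp_all
  | c :: b :: _, hgap, _, hmin, hle =>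
    have := (List.pairwise_cons.1 hgap).1 b (by simp)
    have := hmin b (by simp)
    have := hle c (by simp)
    omega

theorem memXnk_F_add_iff (hF : IsGenFibonacci n F) (hn : 0 < n) {s x : ℕ}
    (hx : x < F (k + s + 1)) : MemXnk n k F (F (k + s + n) + x) ↔ MemXnk n k F x := by
  simp only [memXnk_iff_desc]
  constructor
  · rintro ⟨-, _ | ⟨c, L⟩, hge, hgap, hsum, hkL, hmin⟩
    · simp at hkL
    have hlt : F (k + s + n) + x < F (k + s + n + 1) := by
      rw [hF.succ _ (by omega), show k + s + n + 1 - n = k + s + 1 by omega]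
      omega
    have hc_le : c ≤ k + s + n :=
      hF.le_of_mem_of_sum_map_lt hn hge List.mem_cons_self (hsum ▸ hlt)
    have hc_ge : k + s + n < c + 1 :=
      hF.monotoneOn.reflect_lt (Set.mem_Ici.2 (by omega)) (by simp) <|
      calc F (k + s + n) ≤ ((c :: L).map F).sum := by omega
        _ < F (c + 1) := hF.sum_map_lt hn hge hgap fun a ha => by
          rcases List.mem_cons.1 ha with rfl | ha
          · rfl
          · have := (List.pairwise_cons.1 hgap).1 a ha
            omega
    obtain rfl : c = k + s + n := by omega
    have hkL : k ∈ L := by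
      rcases List.mem_cons.1 hkL with h | h
      · omega
      · exact h
    have hx : (L.map F).sum = x := by simp at hsum; omega
    have hFk := hF.pos hn (j := k) (by have := hge k (by simp [hkL]); omega)
    have := List.le_sum_of_mem (List.mem_map_of_mem (f := F) hkL)
    exact ⟨by omega, L, fun a ha => hge a (by simp [ha]), (List.pairwise_cons.1 hgap).2, hx, hkL,
      fun a ha => hmin a (by simp [ha])⟩
  · rintro ⟨hx0, L, hge, hgap, rfl, hkL, hmin⟩
    refine ⟨by omega, (k + s + n) :: L, ?_, List.pairwise_cons.2 ⟨fun b hb => ?_, hgap⟩,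
      by simp, by simp [hkL], ?_⟩
    · exact List.forall_mem_cons.2 ⟨by omega, hge⟩
    · have := hF.le_of_mem_of_sum_map_lt hn hge hb hx
      omega
    · exact List.forall_mem_cons.2 ⟨by omega, hmin⟩

end Decomposition

section Counting

open Classical

variable {n k : ℕ} {F : ℕ → ℕ}

theorem count_memXnk_F_add (hF : IsGenFibonacci n F) (hn : 0 < n) {s x : ℕ}
    (hx : x ≤ F (k + s + 1)) :
    Nat.count (MemXnk n k F) (F (k + s + n) + x) =
      Nat.count (MemXnk n k F) (F (k + s + n)) + Nat.count (MemXnk n k F) x := by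
  rw [Nat.count_add]
  congr 1
  exact le_antisymm
    (Nat.count_mono_left fun z hz h => (memXnk_F_add_iff hF hn (by omega)).1 h)
    (Nat.count_mono_left fun z hz h => (memXnk_F_add_iff hF hn (by omega)).2 h)

theorem count_memXnk_F (hF : IsGenFibonacci n F) (hn : 0 < n) (hk : n ≤ k) (t : ℕ) :
    Nat.count (MemXnk n k F) (F (k + t + 1)) = F (t + 1) := by
  induction t using Nat.strong_induction_on with
  | _ t ih =>
    rcases lt_or_ge t n with ht | ht
    · have hFk : F k < F (k + t + 1) := (hF.lt_succ hn hk).trans_le <|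
        hF.monotoneOn (Set.mem_Ici.2 (by omega)) (by simp) (by omega)
      rw [hF.eq_one (t + 1) (by omega) ht, Nat.count_eq_card_filter_range, Finset.card_eq_one]
      refine ⟨F k, Finset.eq_singleton_iff_unique_mem.2 ⟨?_, fun y hy => ?_⟩⟩
      · simpa [hFk] using memXnk_self hF hn hk
      · rw [Finset.mem_filter, Finset.mem_range] at hy
        exact eq_of_memXnk_of_lt hF hn hy.2 <| hy.1.trans_le <|
          hF.monotoneOn (Set.mem_Ici.2 (by omega)) (Set.mem_Ici.2 (by omega)) (by omega)
    · obtain ⟨s, rfl⟩ : ∃ s, t = s + n := ⟨t - n, by omega⟩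
      have ih₁ := ih (s + n - 1) (by omega)
      rw [show k + (s + n - 1) + 1 = k + s + n by omega, Nat.sub_add_cancel (by omega)] at ih₁
      have ih₂ := ih s (by omega)
      rw [show k + (s + n) + 1 = k + s + n + 1 by omega, hF.succ _ (by omega),
        show k + s + n + 1 - n = k + s + 1 by omega, count_memXnk_F_add hF hn le_rfl, ih₁, ih₂,
        hF.succ (s + n) (by omega), show s + n + 1 - n = s + 1 by omega]

end Counting

theorem Nat.eq_nth_of_strictMono_of_range_eq {p : ℕ → Prop} {f : ℕ → ℕ}
    (hf : StrictMono f) (hrange : Set.range f = Set.ofPred p) : f = Nat.nth p := by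
  have hinf : (Set.ofPred p).Infinite := hrange ▸ Set.infinite_range_of_injective hf.injective
  have huniv : {r : ℕ | ∀ hfin : (Set.ofPred p).Finite, r < hfin.toFinset.card} = Set.univ :=
    Set.eq_univ_of_forall fun _ hfin => absurd hfin hinf
  funext r
  refine Nat.eq_nth_of_strictMonoOn_of_mapsTo_of_surjOn f ?_ ?_ ?_ (huniv ▸ Set.mem_univ r)
  all_goals rw [huniv]
  · exact fun y hy => by simpa [← hrange] using hy
  · exact fun r _ => hrange ▸ Set.mem_range_self r
  · exact hf.strictMonoOn _

theorem enum_eq_iff_count_eq {p : ℕ → Prop} [DecidablePred p] {q : ℕ → ℕ}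
    (hq_mem : ∀ r, 1 ≤ r → p (q r)) (hq_mono : ∀ r, 1 ≤ r → q r < q (r + 1))
    (hq_surj : ∀ x, p x → ∃ r, 1 ≤ r ∧ q r = x) {r y : ℕ} (hy : p y) :
    q (r + 1) = y ↔ Nat.count p y = r := by
  have hq : StrictMono fun r => q (r + 1) :=
    strictMono_nat_of_lt_succ fun r => hq_mono _ (by omega)
  have hrange : Set.range (fun r => q (r + 1)) = Set.ofPred p := by
    ext y
    refine ⟨by rintro ⟨r, rfl⟩; exact hq_mem _ (by omega), fun hy => ?_⟩
    obtain ⟨r, hr, rfl⟩ := hq_surj y hy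
    exact ⟨r - 1, by simp [Nat.sub_add_cancel hr]⟩
  have hinf : (Set.ofPred p).Infinite := hrange ▸ Set.infinite_range_of_injective hq.injective
  rw [congrFun (Nat.eq_nth_of_strictMono_of_range_eq hq hrange) r]
  constructor
  · rintro rfl
    exact Nat.count_nth_of_infinite hinf r
  · rintro rfl
    exact Nat.nth_count hy

/-- Let `k ≥ n ≥ 3` and `m ≥ 2n`, and let `q 1 < q 2 < ⋯` enumerate the
positive integers whose `n`-decomposition has `F k` as smallest summand.
Then for every `1 ≤ i ≤ F (m-n+1)`, `q (i + F m) = q i + F (k+m)`. -/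
theorem q_shift (n k : ℕ) (hn : 3 ≤ n) (hk : n ≤ k)
    (F : ℕ → ℕ)
    (hF1 : ∀ i, 1 ≤ i → i ≤ n → F i = 1)
    (hFrec : ∀ m, n ≤ m → F (m + 1) = F m + F (m + 1 - n))
    (q : ℕ → ℕ)
    (hq_mem : ∀ r, 1 ≤ r → MemXnk n k F (q r))
    (hq_mono : ∀ r, 1 ≤ r → q r < q (r + 1))
    (hq_surj : ∀ x, MemXnk n k F x → ∃ r, 1 ≤ r ∧ q r = x)
    (m : ℕ) (hm : 2 * n ≤ m) :
    ∀ i, 1 ≤ i → i ≤ F (m - n + 1) → q (i + F m) = q i + F (k + m) := by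
  classical
  have hF : IsGenFibonacci n F := ⟨hF1, hFrec⟩
  have hn : 0 < n := by omega
  obtain ⟨s, rfl⟩ : ∃ s, m = s + n := ⟨m - n, by omega⟩
  rintro _ hi1 hi
  obtain ⟨i, rfl⟩ : ∃ i, _ = i + 1 := ⟨_, (Nat.sub_add_cancel hi1).symm⟩
  rw [Nat.add_sub_cancel] at hi
  have hqi_mem := hq_mem (i + 1) le_add_self
  have hcount_qi : Nat.count (MemXnk n k F) (q (i + 1)) = i :=
    (enum_eq_iff_count_eq hq_mem hq_mono hq_surj hqi_mem).1 rfl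
  have hqi : q (i + 1) < F (k + s + 1) := Nat.lt_of_count_lt_count <| by
    rw [hcount_qi, count_memXnk_F hF hn hk]
    omega
  have hcount : Nat.count (MemXnk n k F) (F (k + s + n) + q (i + 1)) = F (s + n) + i := by
    have := count_memXnk_F hF hn hk (s + n - 1)
    rw [show k + (s + n - 1) + 1 = k + s + n by omega, Nat.sub_add_cancel (by omega)] at this
    rw [count_memXnk_F_add hF hn hqi.le, hcount_qi, this]
  rw [show i + 1 + F (s + n) = F (s + n) + i + 1 by omega, ← add_assoc, add_comm (q _)]
  exact (enum_eq_iff_count_eq hq_mem hq_mono hq_surj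
    ((memXnk_F_add_iff hF hn hqi).2 hqi_mem)).2 hcount
end
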